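/- arXiv:2504.14442 — 5 statements merged into one kernel-verified Lean document; each statement's English description precedes it below -/
import Mathlib

section
/- Each component of the Laplace–Runge–Lenz vector A = p × J − q/‖q‖ Poisson-commutes with the Kepler Hamiltonian h(q,p) = ‖p‖²/2 − 1/‖q‖, i.e. {Aⁱ, h} = 0 for i = 1,2,3. -/
noncomputable section

abbrev R3 := Fin 3 → ℝ

def dot3 (a b : R3) : ℝ := a 0 * b 0 + a 1 * b 1 + a 2 * b 2
def norm3 (a : R3) : ℝ := Real.sqrt (dot3 a a)
def cross3 (a b : R3) : R3 :=
  ![a 1 * b 2 - a 2 * b 1, a 2 * b 0 - a 0 * b 2, a 0 * b 1 - a 1 * b 0]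

/-- Kepler Hamiltonian. -/
def keplerH (q p : R3) : ℝ := norm3 p ^ 2 / 2 - 1 / norm3 q
/-- Components of the angular momentum `J = q × p`. -/
def Jc (i : Fin 3) (q p : R3) : ℝ := cross3 q p i
/-- Laplace–Runge–Lenz vector `A = p × J − q/‖q‖`. -/
def LRL (q p : R3) : R3 := fun i => cross3 p (cross3 q p) i - q i / norm3 q

/-- Partial derivative in `qⁱ`. -/
def pdq (f : R3 → R3 → ℝ) (i : Fin 3) (q p : R3) : ℝ :=
  deriv (fun t => f (Function.update q i t) p) (q i)
/-- Partial derivative in `pᵢ`. -/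
def pdp (f : R3 → R3 → ℝ) (i : Fin 3) (q p : R3) : ℝ :=
  deriv (fun t => f q (Function.update p i t)) (p i)
/-- Canonical Poisson bracket. -/
def poisson (f g : R3 → R3 → ℝ) (q p : R3) : ℝ :=
  ∑ i : Fin 3, (pdq f i q p * pdp g i q p - pdp f i q p * pdq g i q p)

/-- Levi-Civita symbol on `Fin 3`. -/
def eps (i j k : Fin 3) : ℝ :=
  if (i = 0 ∧ j = 1 ∧ k = 2) ∨ (i = 1 ∧ j = 2 ∧ k = 0) ∨ (i = 2 ∧ j = 0 ∧ k = 1) then 1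
  else if (i = 0 ∧ j = 2 ∧ k = 1) ∨ (i = 2 ∧ j = 1 ∧ k = 0) ∨ (i = 1 ∧ j = 0 ∧ k = 2) then -1
  else 0

/-! By the double cross product formula, `A = ⟪p, p⟫ q - ⟪q, p⟫ p - q / ‖q‖`, which makes sense in
any real inner product space. The bracket `{Aⁱ, h}` is the derivative of `Aⁱ` along the Kepler
vector field `(∂h/∂p, -∂h/∂q) = (p, -q / ‖q‖³)`. The `q`-derivative of `A` in direction `p` is
`-p / ‖q‖ + ⟪q, p⟫ q / ‖q‖³`, and so is its `p`-derivative in direction `q / ‖q‖³` once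
`⟪q, q⟫ = ‖q‖²` is used; the two cancel. -/

open scoped RealInnerProductSpace

section InnerProductSpace

variable {E : Type*} [NormedAddCommGroup E] [InnerProductSpace ℝ E] {q p : E}

theorem hasFDerivAt_norm_of_ne_zero (hq : q ≠ 0) :
    HasFDerivAt (fun x : E => ‖x‖) (‖q‖⁻¹ • innerSL ℝ q) q := by
  have h := (hasStrictFDerivAt_norm_sq q).hasFDerivAt.sqrt (by positivity)
  simp only [Real.sqrt_sq (norm_nonneg _)] at h
  refine h.congr_fderiv ?_
  ext v; simp; field_simp

theorem hasFDerivAt_inv_norm (hq : q ≠ 0) :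
    HasFDerivAt (fun x : E => ‖x‖⁻¹) (-(‖q‖ ^ 3)⁻¹ • innerSL ℝ q) q := by
  refine ((hasFDerivAt_inv (norm_ne_zero_iff.mpr hq)).comp q
    (hasFDerivAt_norm_of_ne_zero hq)).congr_fderiv ?_
  ext v; simp; field_simp

namespace Kepler

def rungeLenz (q p : E) : E := ⟪p, p⟫ • q - ⟪q, p⟫ • p - ‖q‖⁻¹ • q

def hamiltonian (q p : E) : ℝ := ‖p‖ ^ 2 / 2 - ‖q‖⁻¹

theorem hasFDerivAt_rungeLenz_fst (hq : q ≠ 0) :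
    HasFDerivAt (fun x => rungeLenz x p)
      (⟪p, p⟫ • ContinuousLinearMap.id ℝ E - (innerSL ℝ p).smulRight p
        - ‖q‖⁻¹ • ContinuousLinearMap.id ℝ E + (‖q‖ ^ 3)⁻¹ • (innerSL ℝ q).smulRight q) q := by
  refine ((((hasFDerivAt_id q).const_smul ⟪p, p⟫).sub
    (((hasFDerivAt_id q).inner ℝ (hasFDerivAt_const p q)).smul_const p)).sub
    ((hasFDerivAt_inv_norm hq).smul (hasFDerivAt_id q))).congr_fderiv ?_
  ext v
  simp [real_inner_comm]
  module

theorem hasFDerivAt_rungeLenz_snd :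
    HasFDerivAt (rungeLenz q)
      (2 • (innerSL ℝ p).smulRight q - (innerSL ℝ q).smulRight p
        - ⟪q, p⟫ • ContinuousLinearMap.id ℝ E) p := by
  refine (((((hasFDerivAt_id p).inner ℝ (hasFDerivAt_id p)).smul_const q).sub
    (((hasFDerivAt_const q p).inner ℝ (hasFDerivAt_id p)).smul (hasFDerivAt_id p))).sub_const
    (‖q‖⁻¹ • q)).congr_fderiv ?_
  ext v
  simp [real_inner_comm]
  module

theorem fderiv_rungeLenz_keplerFlow_eq_zero (hq : q ≠ 0) :
    fderiv ℝ (fun x => rungeLenz x p) q p - fderiv ℝ (rungeLenz q) p ((‖q‖ ^ 3)⁻¹ • q) = 0 := by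
  rw [(hasFDerivAt_rungeLenz_fst hq).fderiv, hasFDerivAt_rungeLenz_snd.fderiv]
  simp [real_inner_comm]
  match_scalars <;> field_simp <;> ring

theorem hasFDerivAt_hamiltonian_fst (hq : q ≠ 0) :
    HasFDerivAt (fun x => hamiltonian x p) ((‖q‖ ^ 3)⁻¹ • innerSL ℝ q) q := by
  refine ((hasFDerivAt_inv_norm hq).const_sub _).congr_fderiv ?_
  simp

theorem hasFDerivAt_hamiltonian_snd : HasFDerivAt (hamiltonian q) (innerSL ℝ p) p := by
  have h := ((hasStrictFDerivAt_norm_sq p).hasFDerivAt.mul_const (2⁻¹ : ℝ)).sub_const ‖q‖⁻¹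
  simp only [← div_eq_mul_inv] at h
  refine h.congr_fderiv ?_
  ext v; simp

end Kepler

end InnerProductSpace

theorem hasFDerivAt_comp_toLp {ι F : Type*} [Fintype ι] [NormedAddCommGroup F] [NormedSpace ℝ F]
    {g : EuclideanSpace ℝ ι → F} {L : EuclideanSpace ℝ ι →L[ℝ] F} {q : ι → ℝ}
    (h : HasFDerivAt g L (WithLp.toLp 2 q)) :
    HasFDerivAt (fun x => g (WithLp.toLp 2 x))
      (L.comp (EuclideanSpace.equiv ι ℝ).symm.toContinuousLinearMap) q :=
  h.comp q (EuclideanSpace.equiv ι ℝ).symm.hasFDerivAt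

theorem sum_apply_single_mul {ι : Type*} [Fintype ι] [DecidableEq ι] (L : (ι → ℝ) →L[ℝ] ℝ)
    (v : ι → ℝ) : ∑ j, L (Pi.single j 1) * v j = L v := by
  conv_rhs => rw [pi_eq_sum_univ' v]
  simp [mul_comm]

theorem dot3_eq_inner (a b : R3) : dot3 a b = ⟪WithLp.toLp 2 a, WithLp.toLp 2 b⟫ := by
  simp [dot3, EuclideanSpace.inner_toLp_toLp, dotProduct, Fin.sum_univ_three]
  ring

theorem norm3_eq_norm (a : R3) : norm3 a = ‖WithLp.toLp 2 a‖ := by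
  rw [norm3, dot3_eq_inner, norm_eq_sqrt_real_inner]

theorem cross3_cross3 (q p : R3) : cross3 p (cross3 q p) = dot3 p p • q - dot3 q p • p := by
  ext i; fin_cases i <;> simp [cross3, dot3] <;> ring

theorem LRL_eq_rungeLenz (q p : R3) :
    LRL q p = WithLp.ofLp (Kepler.rungeLenz (WithLp.toLp 2 q) (WithLp.toLp 2 p)) := by
  ext i
  simp [LRL, Kepler.rungeLenz, cross3_cross3, dot3_eq_inner, norm3_eq_norm, div_eq_inv_mul]

theorem keplerH_eq_hamiltonian (q p : R3) :
    keplerH q p = Kepler.hamiltonian (WithLp.toLp 2 q) (WithLp.toLp 2 p) := by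
  simp [keplerH, Kepler.hamiltonian, norm3_eq_norm]

theorem pdq_eq_of_hasFDerivAt {f : R3 → R3 → ℝ} {q p : R3} {L : R3 →L[ℝ] ℝ}
    (h : HasFDerivAt (fun x => f x p) L q) (j : Fin 3) : pdq f j q p = L (Pi.single j 1) :=
  (h.comp_hasDerivAt_of_eq (q j) (hasDerivAt_update q j (q j))
    (Function.update_eq_self j q).symm).deriv

theorem pdp_eq_of_hasFDerivAt {f : R3 → R3 → ℝ} {q p : R3} {L : R3 →L[ℝ] ℝ}
    (h : HasFDerivAt (f q) L p) (j : Fin 3) : pdp f j q p = L (Pi.single j 1) :=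
  (h.comp_hasDerivAt_of_eq (p j) (hasDerivAt_update p j (p j))
    (Function.update_eq_self j p).symm).deriv

theorem poisson_eq_of_hasFDerivAt {f g : R3 → R3 → ℝ} {q p : R3} {Lq Lp : R3 →L[ℝ] ℝ}
    (hq : HasFDerivAt (fun x => f x p) Lq q) (hp : HasFDerivAt (f q) Lp p) :
    poisson f g q p = Lq (fun j => pdp g j q p) - Lp (fun j => pdq g j q p) := by
  simp only [poisson, Finset.sum_sub_distrib, pdq_eq_of_hasFDerivAt hq,
    pdp_eq_of_hasFDerivAt hp, sum_apply_single_mul]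

theorem pdp_keplerH (q p : R3) : (fun j => pdp keplerH j q p) = p := by
  have h := hasFDerivAt_comp_toLp
    (Kepler.hasFDerivAt_hamiltonian_snd (q := WithLp.toLp 2 q) (p := WithLp.toLp 2 p))
  simp only [← keplerH_eq_hamiltonian] at h
  funext j
  rw [pdp_eq_of_hasFDerivAt h]
  simp [EuclideanSpace.inner_single_right]

theorem pdq_keplerH {q : R3} (hq : q ≠ 0) (p : R3) :
    (fun j => pdq keplerH j q p) = (norm3 q ^ 3)⁻¹ • q := by
  have h := hasFDerivAt_comp_toLp
    (Kepler.hasFDerivAt_hamiltonian_fst (p := WithLp.toLp 2 p) (q := WithLp.toLp 2 q) (by simpa))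
  simp only [← keplerH_eq_hamiltonian] at h
  funext j
  rw [pdq_eq_of_hasFDerivAt h]
  simp [EuclideanSpace.inner_single_right, norm3_eq_norm]

theorem stmt3 (q p : R3) (hq : q ≠ 0) (i : Fin 3) :
    poisson (fun q p => LRL q p i) keplerH q p = 0 := by
  have hx : WithLp.toLp 2 q ≠ 0 := by simpa
  have hA_fst := hasFDerivAt_comp_toLp ((EuclideanSpace.proj i).hasFDerivAt.comp _
    (Kepler.hasFDerivAt_rungeLenz_fst (p := WithLp.toLp 2 p) hx).differentiableAt.hasFDerivAt)
  have hA_snd := hasFDerivAt_comp_toLp ((EuclideanSpace.proj i).hasFDerivAt.comp _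
    (Kepler.hasFDerivAt_rungeLenz_snd (q := WithLp.toLp 2 q)
      (p := WithLp.toLp 2 p)).differentiableAt.hasFDerivAt)
  simp only [LRL_eq_rungeLenz]
  rw [poisson_eq_of_hasFDerivAt hA_fst hA_snd, pdp_keplerH, pdq_keplerH hq]
  simpa [norm3_eq_norm] using
    congrArg (· i) (Kepler.fderiv_rungeLenz_keplerFlow_eq_zero (p := WithLp.toLp 2 p) hx)
end
end

section
/- Suppose smooth curves A, J : ℝ → ℝ³ satisfy dA/dt = −A × W and dJ/dt = −J × W for a common curve W : ℝ → ℝ³, with ‖J(t)‖ = J₀ ≠ 0 constant. Then X(t) = (A(t) × J(t))/J₀² satisfies dX/dt = −X × W. -/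
noncomputable section

/-!
The equation `ẋ = -x × W = W × x` is an infinitesimal rotation with angular velocity `W`, and the
cross product is rotation-equivariant. Concretely, by the Leibniz rule and the Jacobi identity,
`(A × J)' = (W × A) × J + A × (W × J) = W × (A × J)`; the constant factor `J₀⁻²` passes through
by linearity.
-/

open Matrix

theorem cross3_eq_crossProduct (a b : R3) : cross3 a b = a ⨯₃ b := rfl

theorem hasDerivAt_cross3 {f g : ℝ → R3} {f' g' : R3} {t : ℝ}
    (hf : HasDerivAt f f' t) (hg : HasDerivAt g g' t) :
    HasDerivAt (fun s => cross3 (f s) (g s)) (cross3 (f t) g' + cross3 f' (g t)) t :=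
  crossProduct.toContinuousBilinearMap.hasDerivAt_of_bilinear (fun _ => hf) (fun _ => hg)

theorem hasDerivAt_cross3_of_rotation {f g : ℝ → R3} {w : R3} {t : ℝ}
    (hf : HasDerivAt f (-(cross3 (f t) w)) t) (hg : HasDerivAt g (-(cross3 (g t) w)) t) :
    HasDerivAt (fun s => cross3 (f s) (g s)) (-(cross3 (cross3 (f t) (g t)) w)) t := by
  refine (hasDerivAt_cross3 hf hg).congr_deriv ?_
  simp only [cross3_eq_crossProduct, cross_anticomm]
  rw [leibniz_cross w (f t) (g t), add_comm]

theorem cross3_smul_left (c : ℝ) (a b : R3) : cross3 (c • a) b = c • cross3 a b :=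
  LinearMap.map_smul₂ crossProduct c a b

theorem stmt8_general (A J : ℝ → R3) (W : ℝ → R3) (J₀ : ℝ)
    (hA : ∀ t : ℝ, HasDerivAt A (-(cross3 (A t) (W t))) t)
    (hJ : ∀ t : ℝ, HasDerivAt J (-(cross3 (J t) (W t))) t) :
    ∀ t : ℝ,
      HasDerivAt (fun s => (J₀ ^ 2)⁻¹ • cross3 (A s) (J s))
        (-(cross3 ((J₀ ^ 2)⁻¹ • cross3 (A t) (J t)) (W t))) t := by
  intro t
  rw [cross3_smul_left, ← smul_neg]
  exact (hasDerivAt_cross3_of_rotation (hA t) (hJ t)).const_smul (J₀ ^ 2)⁻¹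

theorem stmt8 (A J : ℝ → R3) (W : ℝ → R3) (J₀ : ℝ) (hJ₀ : J₀ ≠ 0)
    (hA : ∀ t : ℝ, HasDerivAt A (-(cross3 (A t) (W t))) t)
    (hJ : ∀ t : ℝ, HasDerivAt J (-(cross3 (J t) (W t))) t)
    (hnorm : ∀ t : ℝ, norm3 (J t) = J₀) :
    ∀ t : ℝ,
      HasDerivAt (fun s => (J₀ ^ 2)⁻¹ • cross3 (A s) (J s))
        (-(cross3 ((J₀ ^ 2)⁻¹ • cross3 (A t) (J t)) (W t))) t :=
  stmt8_general A J W J₀ hA hJ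
end
end

section
/- Under the Moser map φ_M(q,p) = (u,v), one has ‖v‖ = (‖q‖/2)(‖p‖²+1) = F(q,p), where F is the regularized Kepler Hamiltonian. In particular, (q,p) lies on h⁻¹(−1/2) (i.e. ‖p‖²/2 − 1/‖q‖ = −1/2) if and only if ‖v‖ = 1. -/
noncomputable section

abbrev R4 := Fin 4 → ℝ

def dot4 (a b : R4) : ℝ := a 0 * b 0 + a 1 * b 1 + a 2 * b 2 + a 3 * b 3
def norm4 (a : R4) : ℝ := Real.sqrt (dot4 a a)
/-- First component (`u`) of the Moser map. -/
def moserU (q p : R3) : R4 :=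
  ![2 * p 0 / (norm3 p ^ 2 + 1), 2 * p 1 / (norm3 p ^ 2 + 1),
    2 * p 2 / (norm3 p ^ 2 + 1), (norm3 p ^ 2 - 1) / (norm3 p ^ 2 + 1)]

/-- Second component (`v`) of the Moser map. -/
def moserV (q p : R3) : R4 :=
  ![-(norm3 p ^ 2 + 1) * q 0 / 2 + dot3 q p * p 0,
    -(norm3 p ^ 2 + 1) * q 1 / 2 + dot3 q p * p 1,
    -(norm3 p ^ 2 + 1) * q 2 / 2 + dot3 q p * p 2,
    -(dot3 q p)]

lemma norm3_sq (a : R3) : norm3 a ^ 2 = dot3 a a := by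
  have h : 0 ≤ dot3 a a := by unfold dot3; nlinarith [sq_nonneg (a 0), sq_nonneg (a 1), sq_nonneg (a 2)]
  simpa [norm3] using Real.sq_sqrt h

lemma norm3_nonneg (a : R3) : 0 ≤ norm3 a := Real.sqrt_nonneg _

theorem stmt13 (q p : R3) (hq : q ≠ 0) :
    norm4 (moserV q p) = norm3 q * (norm3 p ^ 2 + 1) / 2 ∧
      (keplerH q p = -(1 / 2) ↔ norm4 (moserV q p) = 1) := by
  set s := norm3 p ^ 2 with hs
  have hp2 : s = dot3 p p := norm3_sq p
  have hq2 : norm3 q ^ 2 = dot3 q q := norm3_sq q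
  have hqpos : 0 < norm3 q := by
    rcases lt_or_eq_of_le (norm3_nonneg q) with h | h
    · exact h
    · exfalso
      have h0 : dot3 q q = 0 := by rw [← hq2, ← h]; ring
      apply hq
      funext i
      have h00 : q 0 = 0 ∧ q 1 = 0 ∧ q 2 = 0 := by
        unfold dot3 at h0
        refine ⟨?_, ?_, ?_⟩ <;> nlinarith [sq_nonneg (q 0), sq_nonneg (q 1), sq_nonneg (q 2)]
      fin_cases i <;> simp [h00.1, h00.2.1, h00.2.2]
  have hspos : 0 ≤ s := by rw [hs]; positivity
  have key : dot4 (moserV q p) (moserV q p) = (norm3 q * (s + 1) / 2) ^ 2 := by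
    have expand : (norm3 q * (s + 1) / 2) ^ 2 = dot3 q q * (dot3 p p + 1) ^ 2 / 4 := by
      rw [hs, ← hq2, ← hp2, ← hs]; ring
    rw [expand]
    unfold dot4 moserV dot3
    simp only [Matrix.cons_val_zero, Matrix.cons_val_one, Matrix.head_cons,
      Matrix.cons_val_two, Matrix.tail_cons, Matrix.cons_val_three]
    rw [show norm3 p ^ 2 = p 0 * p 0 + p 1 * p 1 + p 2 * p 2 from norm3_sq p]
    ring
  have h1 : norm4 (moserV q p) = norm3 q * (s + 1) / 2 := by
    unfold norm4
    rw [key, Real.sqrt_sq (by positivity)]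
  refine ⟨h1, ?_⟩
  rw [h1]
  unfold keplerH
  rw [← hs]
  constructor
  · intro h
    have : 1 / norm3 q = s / 2 + 1 / 2 := by linarith
    field_simp at this ⊢
    nlinarith
  · intro h
    have : norm3 q * (s + 1) = 2 := by linarith
    field_simp
    nlinarith
end
end

section
/- Under the Moser map φ_M(q,p) = (u,v), the quantities λ¹(u,v) = u²v₃ − u³v₂, λ²(u,v) = −u¹v₃ + u³v₁, λ³(u,v) = u¹v₂ − u²v₁ pull back to the angular momentum components: λⁱ(φ_M(q,p)) = Jⁱ(q,p) = (q × p)ⁱ for i = 1,2,3 and all (q,p) with h(q,p) = −1/2. -/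
noncomputable section

theorem stmt14 (q p : R3) (hq : q ≠ 0) (hE : keplerH q p = -(1 / 2)) :
    moserU q p 1 * moserV q p 2 - moserU q p 2 * moserV q p 1 = cross3 q p 0 ∧
    -(moserU q p 0) * moserV q p 2 + moserU q p 2 * moserV q p 0 = cross3 q p 1 ∧
    moserU q p 0 * moserV q p 1 - moserU q p 1 * moserV q p 0 = cross3 q p 2 := by
  have hs : norm3 p ^ 2 + 1 ≠ 0 := by positivity
  simp only [moserU, moserV, cross3, Matrix.cons_val_zero, Matrix.cons_val_one,
    Matrix.head_cons, Matrix.cons_val_two, Matrix.tail_cons]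
  refine ⟨?_, ?_, ?_⟩ <;> field_simp <;> ring
end
end

section
/- The Moser map φ_M is injective on (ℝ³\{0}) × ℝ³ and its image is contained in {(u,v) ∈ ℝ⁴ × ℝ⁴ : ‖u‖ = 1, u·v = 0, u ≠ (0,0,0,1), v ≠ 0}. -/
noncomputable section

lemma dot3_nonneg (p : R3) : 0 ≤ dot3 p p := by
  unfold dot3; nlinarith [sq_nonneg (p 0), sq_nonneg (p 1), sq_nonneg (p 2)]

lemma sqn (p : R3) : norm3 p ^ 2 = dot3 p p := Real.sq_sqrt (dot3_nonneg p)

lemma den_pos (p : R3) : 0 < dot3 p p + 1 := by linarith [dot3_nonneg p]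

theorem stmt15 :
    (∀ q p q' p' : R3, q ≠ 0 → q' ≠ 0 →
      moserU q p = moserU q' p' → moserV q p = moserV q' p' → q = q' ∧ p = p') ∧
    (∀ q p : R3, q ≠ 0 →
      norm4 (moserU q p) = 1 ∧ dot4 (moserU q p) (moserV q p) = 0 ∧
        moserU q p ≠ ![0, 0, 0, 1] ∧ moserV q p ≠ 0) := by
  constructor
  · intro q p q' p' hq hq' hu hv
    have hd := den_pos p
    have hd' := den_pos p'
    have h0 := congrFun hu 0
    have h1 := congrFun hu 1
    have h2 := congrFun hu 2
    have h3 := congrFun hu 3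
    simp only [moserU, sqn, Matrix.cons_val_zero, Matrix.cons_val_one, Matrix.head_cons,
      Matrix.cons_val_two, Matrix.tail_cons, Matrix.cons_val_three] at h0 h1 h2 h3
    have hs : dot3 p p = dot3 p' p' := by
      field_simp at h3; nlinarith [h3]
    rw [← hs] at h0 h1 h2
    have hp0 : p 0 = p' 0 := by field_simp at h0; linarith
    have hp1 : p 1 = p' 1 := by field_simp at h1; linarith
    have hp2 : p 2 = p' 2 := by field_simp at h2; linarith
    have hp : p = p' := by
      funext i; fin_cases i <;> assumption
    subst hp
    have g0 := congrFun hv 0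
    have g1 := congrFun hv 1
    have g2 := congrFun hv 2
    have g3 := congrFun hv 3
    simp only [moserV, sqn, Matrix.cons_val_zero, Matrix.cons_val_one, Matrix.head_cons,
      Matrix.cons_val_two, Matrix.tail_cons, Matrix.cons_val_three] at g0 g1 g2 g3
    have hc : dot3 q p = dot3 q' p := by linarith
    rw [hc] at g0 g1 g2
    have hne : (dot3 p p + 1) ≠ 0 := hd.ne'
    have hq0 : q 0 = q' 0 := by
      have : (dot3 p p + 1) * q 0 = (dot3 p p + 1) * q' 0 := by linarith
      exact mul_left_cancel₀ hne this
    have hq1 : q 1 = q' 1 := by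
      have : (dot3 p p + 1) * q 1 = (dot3 p p + 1) * q' 1 := by linarith
      exact mul_left_cancel₀ hne this
    have hq2 : q 2 = q' 2 := by
      have : (dot3 p p + 1) * q 2 = (dot3 p p + 1) * q' 2 := by linarith
      exact mul_left_cancel₀ hne this
    exact ⟨by funext i; fin_cases i <;> assumption, rfl⟩
  · intro q p hq
    have hd := den_pos p
    have hne : (dot3 p p + 1) ≠ 0 := hd.ne'
    refine ⟨?_, ?_, ?_, ?_⟩
    · have h : dot4 (moserU q p) (moserU q p) = 1 := by
        simp only [dot4, moserU, sqn, Matrix.cons_val_zero, Matrix.cons_val_one, Matrix.head_cons,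
          Matrix.cons_val_two, Matrix.tail_cons, Matrix.cons_val_three]
        field_simp
        unfold dot3; ring
      rw [norm4, h, Real.sqrt_one]
    · simp only [dot4, moserU, moserV, sqn, Matrix.cons_val_zero, Matrix.cons_val_one,
        Matrix.head_cons, Matrix.cons_val_two, Matrix.tail_cons, Matrix.cons_val_three]
      field_simp
      unfold dot3; ring
    · intro h
      have h3 := congrFun h 3
      simp only [moserU, sqn, Matrix.cons_val_three, Matrix.tail_cons, Matrix.head_cons,
        Matrix.cons_val_one, Matrix.cons_val_zero] at h3
      field_simp at h3
      linarith
    · intro h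
      have g3 := congrFun h 3
      have g0 := congrFun h 0
      have g1 := congrFun h 1
      have g2 := congrFun h 2
      simp only [moserV, sqn, Matrix.cons_val_zero, Matrix.cons_val_one, Matrix.head_cons,
        Matrix.cons_val_two, Matrix.tail_cons, Matrix.cons_val_three, Pi.zero_apply] at g0 g1 g2 g3
      have hc : dot3 q p = 0 := by linarith
      rw [hc] at g0 g1 g2
      apply hq
      funext i; fin_cases i
      · show q 0 = 0
        nlinarith [g0]
      · show q 1 = 0
        nlinarith [g1]
      · show q 2 = 0
        nlinarith [g2]
end
end
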